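/- Let 0 < α < 1 and 0 < τ < 1. There exist a constant C > 0 and m ∈ ℕ such that for every x ∈ ℝ and every complex s with Re s > 0, |S̃(x, s)| ≤ C·(1 + |s|^m)/Re s, where S̃(x,s) = (1/(2s))·√((1 + τs^α)/(1 + s^α))·exp( −|x|·s·√((1 + τs^α)/(1 + s^α)) ). -/

import Mathlib

/-!
For `Re s > 0` and `0 ≤ α ≤ 1` the power `a = s ^ α` has argument `α · arg s`, so it lies in the
right half-plane, on the same side of the real axis as `s`. For `0 ≤ τ ≤ 1` the quotient
`q = (1 + τ a) / (1 + a)` then satisfies `‖q‖ ≤ 1`, `Re q > 0` and `Re (s q) ≥ 0`. As `arg s` and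
`arg s + arg q` both lie in `[-π/2, π/2]`, so does their average `arg s + arg q / 2 = arg (s √q)`.
Hence the exponential factor has modulus at most `1`, and `‖S̃(x, s)‖ ≤ 1 / (2 ‖s‖) ≤ 1 / (2 Re s)`.
-/

open Real Complex

namespace Complex

variable {s : ℂ} {α : ℝ}

lemma arg_cpow_ofReal {x : ℂ} (hx : x ≠ 0) {y : ℝ} (hy : arg x * y ∈ Set.Ioc (-π) π) :
    arg (x ^ (y : ℂ)) = arg x * y := by
  rw [cpow_ofReal, arg_real_mul _ (by positivity), ofReal_cos, ofReal_sin,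
    arg_cos_add_sin_mul_I hy]

lemma abs_arg_mul_lt_pi_div_two_of_re_pos (hs : 0 < s.re) (hα0 : 0 ≤ α) (hα1 : α ≤ 1) :
    |arg s * α| < π / 2 := by
  have := abs_arg_lt_pi_div_two_iff.2 (.inl hs)
  rw [abs_mul, abs_of_nonneg hα0]
  nlinarith [abs_nonneg (arg s)]

lemma arg_cpow_ofReal_of_re_pos (hs : 0 < s.re) (hα0 : 0 ≤ α) (hα1 : α ≤ 1) :
    arg (s ^ (α : ℂ)) = arg s * α := by
  have h := abs_lt.1 (abs_arg_mul_lt_pi_div_two_of_re_pos hs hα0 hα1)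
  exact arg_cpow_ofReal (ne_of_apply_ne re hs.ne') ⟨by linarith [pi_pos], by linarith [pi_pos]⟩

lemma re_cpow_ofReal_pos (hs : 0 < s.re) (hα0 : 0 ≤ α) (hα1 : α ≤ 1) :
    0 < (s ^ (α : ℂ)).re := by
  have h := abs_arg_mul_lt_pi_div_two_of_re_pos hs hα0 hα1
  rw [← arg_cpow_ofReal_of_re_pos hs hα0 hα1, abs_arg_lt_pi_div_two_iff, cpow_eq_zero_iff] at h
  exact h.resolve_right fun h0 => by simp [h0.1] at hs

lemma im_nonpos_of_arg_nonpos {z : ℂ} (h : arg z ≤ 0) : z.im ≤ 0 := by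
  rw [← norm_mul_sin_arg]
  exact mul_nonpos_of_nonneg_of_nonpos (norm_nonneg z)
    (Real.sin_nonpos_of_nonpos_of_neg_pi_le h (neg_pi_lt_arg z).le)

lemma im_mul_im_cpow_ofReal_nonneg (hs : 0 < s.re) (hα0 : 0 ≤ α) (hα1 : α ≤ 1) :
    0 ≤ s.im * (s ^ (α : ℂ)).im := by
  have harg := arg_cpow_ofReal_of_re_pos hs hα0 hα1
  rcases le_total 0 (arg s) with h | h
  · exact mul_nonneg (arg_nonneg_iff.1 h) (arg_nonneg_iff.1 (harg ▸ mul_nonneg h hα0))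
  · exact mul_nonneg_of_nonpos_of_nonpos (im_nonpos_of_arg_nonpos h)
      (im_nonpos_of_arg_nonpos (harg ▸ mul_nonpos_of_nonpos_of_nonneg h hα0))

lemma re_mul_cpow_half_nonneg {z w : ℂ} (hz : 0 < z.re) (hw : 0 < w.re)
    (hzw : 0 ≤ (z * w).re) : 0 ≤ (z * w ^ (1 / 2 : ℂ)).re := by
  have hz0 : z ≠ 0 := ne_of_apply_ne re hz.ne'
  have hw0 : w ≠ 0 := ne_of_apply_ne re hw.ne'
  obtain ⟨hzl, hzu⟩ := abs_lt.1 (abs_arg_lt_pi_div_two_iff.2 (.inl hz))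
  obtain ⟨hwl, hwu⟩ := abs_lt.1 (abs_arg_lt_pi_div_two_iff.2 (.inl hw))
  have hsum : |arg z + arg w| ≤ π / 2 := by
    rw [← arg_mul hz0 hw0 ⟨by linarith, by linarith⟩]
    exact abs_arg_le_pi_div_two_iff.2 hzw
  have hhalf : arg (w ^ (1 / 2 : ℂ)) = arg w * (1 / 2) := by
    simpa using arg_cpow_ofReal hw0 (y := 1 / 2) ⟨by linarith, by linarith⟩
  have hroot0 : w ^ (1 / 2 : ℂ) ≠ 0 := by simp [cpow_eq_zero_iff, hw0]
  obtain ⟨hsl, hsu⟩ := abs_le.1 hsum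
  rw [← abs_arg_le_pi_div_two_iff, arg_mul hz0 hroot0 (by rw [hhalf]; constructor <;> linarith),
    hhalf, abs_le]
  constructor <;> linarith

lemma norm_exp_neg_ofReal_mul_le_one {t : ℝ} (ht : 0 ≤ t) {z : ℂ} (hz : 0 ≤ z.re) :
    ‖exp (-(t : ℂ) * z)‖ ≤ 1 := by
  rw [norm_exp, ← ofReal_neg, re_ofReal_mul, Real.exp_le_one_iff]
  exact mul_nonpos_of_nonpos_of_nonneg (neg_nonpos.2 ht) hz

lemma norm_one_div_two_mul_le {s : ℂ} (hs : 0 < s.re) : ‖1 / (2 * s)‖ ≤ 1 / (2 * s.re) := by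
  rw [norm_div, norm_one, norm_mul, Complex.norm_two]
  gcongr
  exact re_le_norm s

end Complex

section

variable {a : ℂ} {τ : ℝ}

lemma norm_one_add_ofReal_mul_le (ha : 0 ≤ a.re) (hτ0 : 0 ≤ τ) (hτ1 : τ ≤ 1) :
    ‖1 + (τ : ℂ) * a‖ ≤ ‖1 + a‖ := by
  rw [← sq_le_sq₀ (norm_nonneg _) (norm_nonneg _), Complex.sq_norm, Complex.sq_norm,
    normSq_apply, normSq_apply]
  simp only [add_re, add_im, one_re, one_im, re_ofReal_mul, im_ofReal_mul]
  nlinarith [mul_le_mul_of_nonneg_right hτ1 ha, mul_self_nonneg a.re, mul_self_nonneg a.im,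
    mul_le_mul_of_nonneg_left hτ1 hτ0]

lemma norm_one_add_ofReal_mul_div_one_add_le_one (ha : 0 ≤ a.re) (hτ0 : 0 ≤ τ)
    (hτ1 : τ ≤ 1) :
    ‖(1 + (τ : ℂ) * a) / (1 + a)‖ ≤ 1 := by
  rw [norm_div]
  exact div_le_one_of_le₀ (norm_one_add_ofReal_mul_le ha hτ0 hτ1) (norm_nonneg _)

lemma re_one_add_ofReal_mul_div_one_add_pos (ha : 0 ≤ a.re) (hτ0 : 0 ≤ τ) :
    0 < ((1 + (τ : ℂ) * a) / (1 + a)).re := by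
  have hD : 0 < normSq (1 + a) := normSq_pos.2 (ne_of_apply_ne re (by simp; linarith))
  rw [div_re, ← add_div]
  refine div_pos ?_ hD
  simp only [add_re, add_im, one_re, one_im, re_ofReal_mul, im_ofReal_mul]
  nlinarith [mul_nonneg hτ0 ha, mul_nonneg hτ0 (mul_self_nonneg a.im),
    mul_nonneg hτ0 (mul_nonneg ha ha)]

lemma re_mul_one_add_ofReal_mul_div_one_add_nonneg {s : ℂ} (hs : 0 ≤ s.re)
    (hsa : 0 ≤ s.im * a.im) (ha : 0 ≤ a.re) (hτ0 : 0 ≤ τ) (hτ1 : τ ≤ 1) :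
    0 ≤ (s * ((1 + (τ : ℂ) * a) / (1 + a))).re := by
  rw [← mul_div_assoc, div_re, ← add_div]
  refine div_nonneg ?_ (normSq_nonneg _)
  simp only [mul_re, mul_im, add_re, add_im, one_re, one_im, ofReal_re, ofReal_im]
  -- the numerator is `Re s ((1 + τ Re a)(1 + Re a) + τ (Im a)²) + (1 - τ) Im s Im a`
  nlinarith [mul_nonneg hsa (sub_nonneg.2 hτ1),
    mul_nonneg hs (add_nonneg (mul_nonneg (add_nonneg zero_le_one (mul_nonneg hτ0 ha))
      (add_nonneg zero_le_one ha)) (mul_nonneg hτ0 (mul_self_nonneg a.im)))]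

end

/-- For `0 < α < 1`, `0 < τ < 1`, there exist `C > 0` and `m ∈ ℕ`
such that for all `x ∈ ℝ` and all `s` with `Re s > 0`,
`|S̃(x,s)| ≤ C (1 + |s|^m) / Re s`, where
`S̃(x,s) = (1/(2s))·√((1+τs^α)/(1+s^α))·exp(−|x|·s·√((1+τs^α)/(1+s^α)))`. -/
theorem laplace_transform_fund_sol_bound
    (α τ : ℝ) (hα0 : 0 < α) (hα1 : α < 1) (hτ0 : 0 < τ) (hτ1 : τ < 1) :
    ∃ C : ℝ, 0 < C ∧ ∃ m : ℕ, ∀ x : ℝ, ∀ s : ℂ, 0 < s.re →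
      ‖((1 / (2 * s)) *
        (((1 + (τ : ℂ) * s ^ (α : ℂ)) / (1 + s ^ (α : ℂ))) ^ (1/2 : ℂ)) *
        Complex.exp (-((|x| : ℝ) : ℂ) * s *
          (((1 + (τ : ℂ) * s ^ (α : ℂ)) / (1 + s ^ (α : ℂ))) ^ (1/2 : ℂ))))‖
      ≤ C * (1 + ‖s‖ ^ m) / s.re := by
  refine ⟨1 / 4, by norm_num, 0, fun x s hs => ?_⟩
  have ha : 0 < (s ^ (α : ℂ)).re := re_cpow_ofReal_pos hs hα0.le hα1.le
  have hsa := im_mul_im_cpow_ofReal_nonneg hs hα0.le hα1.le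
  set q := (1 + (τ : ℂ) * s ^ (α : ℂ)) / (1 + s ^ (α : ℂ))
  have hq : ‖q‖ ≤ 1 := norm_one_add_ofReal_mul_div_one_add_le_one ha.le hτ0.le hτ1.le
  have hroot : ‖q ^ (1 / 2 : ℂ)‖ ≤ 1 := by
    rw [show (1 / 2 : ℂ) = ((1 / 2 : ℝ) : ℂ) by push_cast; rfl, norm_cpow_real]
    exact Real.rpow_le_one (norm_nonneg q) hq (by norm_num)
  have hexp : ‖exp (-((|x| : ℝ) : ℂ) * s * q ^ (1 / 2 : ℂ))‖ ≤ 1 := by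
    rw [mul_assoc]
    refine norm_exp_neg_ofReal_mul_le_one (abs_nonneg x)
      (re_mul_cpow_half_nonneg hs (re_one_add_ofReal_mul_div_one_add_pos ha.le hτ0.le) ?_)
    exact re_mul_one_add_ofReal_mul_div_one_add_nonneg hs.le hsa ha.le hτ0.le hτ1.le
  rw [norm_mul, norm_mul]
  calc ‖1 / (2 * s)‖ * ‖q ^ (1 / 2 : ℂ)‖ * ‖exp (-((|x| : ℝ) : ℂ) * s * q ^ (1 / 2 : ℂ))‖
        ≤ 1 / (2 * s.re) * 1 * 1 := by
        gcongr
        exact norm_one_div_two_mul_le hs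
    _ = 1 / 4 * (1 + ‖s‖ ^ 0) / s.re := by ring
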